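/- arXiv:2404.03895 — 2 statements merged into one kernel-verified Lean document; each statement's English description precedes it below -/
import Mathlib

section
/- Let G be a finite group and H a normal subgroup of G with |H| = 3 such that the quotient group G/H is isomorphic to the cyclic group Z_3. Then the normal subgroup based power graph Γ_H(G) is isomorphic to the complete graph K_7. -/
/-- The vertex set of the normal subgroup based power graph: `(G \ H) ∪ {e}`. -/
def nsbVertexSet {G : Type*} [Group G] (H : Subgroup G) : Set G :=
  {x | x ∉ H} ∪ {1}

/-- The normal subgroup based power graph `Γ_H(G)`: vertices are `(G \ H) ∪ {e}` and two
distinct vertices `a`, `b` are adjacent iff `aH = b^m H` or `bH = a^n H` for some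
positive integers `m`, `n`. -/
def nsbPowerGraph (G : Type*) [Group G] (H : Subgroup G) :
    SimpleGraph (nsbVertexSet H) where
  Adj a b := (a : G) ≠ (b : G) ∧
    ((∃ m : ℕ, 0 < m ∧ (QuotientGroup.mk (a : G) : G ⧸ H) = QuotientGroup.mk ((b : G) ^ m)) ∨
     (∃ n : ℕ, 0 < n ∧ (QuotientGroup.mk (b : G) : G ⧸ H) = QuotientGroup.mk ((a : G) ^ n)))
  symm := ⟨fun a b => fun ⟨hne, h⟩ => ⟨hne.symm, h.symm⟩⟩
  loopless := ⟨fun a => fun ⟨hne, _⟩ => hne rfl⟩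

/-- The power graph of a group: two distinct elements are adjacent iff one is a positive
power of the other. -/
def powerGraph (K : Type*) [Group K] : SimpleGraph K where
  Adj x y := x ≠ y ∧ ((∃ m : ℕ, 0 < m ∧ x = y ^ m) ∨ (∃ n : ℕ, 0 < n ∧ y = x ^ n))
  symm := ⟨fun x y => fun ⟨hne, h⟩ => ⟨hne.symm, h.symm⟩⟩
  loopless := ⟨fun x => fun ⟨hne, _⟩ => hne rfl⟩

/-- The complete graph `K_n`. -/
def kGraph (n : ℕ) : SimpleGraph (Fin n) := ⊤

/-- The disjoint union `mK_n` of `m` copies of the complete graph `K_n`. -/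
def unionKGraph (m n : ℕ) : SimpleGraph (Fin m × Fin n) where
  Adj x y := x.1 = y.1 ∧ x.2 ≠ y.2
  symm := ⟨fun x y => fun ⟨h1, h2⟩ => ⟨h1.symm, h2.symm⟩⟩
  loopless := ⟨fun x => fun ⟨_, h⟩ => h rfl⟩

/-- The join `Γ₁ ∨ Γ₂` of two graphs: their disjoint union together with all edges
between the two parts. -/
def graphJoin {α β : Type*} (G : SimpleGraph α) (H : SimpleGraph β) :
    SimpleGraph (α ⊕ β) where
  Adj u v := match u, v with
    | Sum.inl u, Sum.inl v => G.Adj u v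
    | Sum.inr u, Sum.inr v => H.Adj u v
    | _, _ => True
  symm := ⟨fun u v => match u, v with
    | Sum.inl u, Sum.inl v => G.adj_symm
    | Sum.inr u, Sum.inr v => H.adj_symm
    | Sum.inl _, Sum.inr _ | Sum.inr _, Sum.inl _ => fun _ => trivial⟩
  loopless := ⟨fun u => by cases u <;> simp [SimpleGraph.irrefl]⟩

/-!
When `G ⧸ H` has prime order, every nontrivial coset generates `G ⧸ H`, so any coset is a
positive power of any nontrivial one; hence `Γ_H(G)` is complete. Here `|G| = 3 · 3 = 9`, so
`Γ_H(G)` has `9 - 3 + 1 = 7` vertices.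
-/

open SimpleGraph

theorem exists_pos_pow_eq_of_prime_card {K : Type*} [Group K] {p : ℕ} [Fact p.Prime]
    (hK : Nat.card K = p) {x : K} (hx : x ≠ 1) (y : K) : ∃ m : ℕ, 0 < m ∧ y = x ^ m := by
  have : Finite K := Nat.finite_of_card_ne_zero (hK ▸ (Fact.out : p.Prime).ne_zero)
  have hy : y ∈ Submonoid.powers x := by
    rw [(isOfFinOrder_of_finite x).mem_powers_iff_mem_zpowers, zpowers_eq_top_of_prime_card hK hx]
    exact Subgroup.mem_top y
  obtain ⟨m, rfl⟩ := hy
  -- `x ^ 0 = x ^ orderOf x`, and `orderOf x` is positive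
  refine ⟨m + orderOf x, by have := (isOfFinOrder_of_finite x).orderOf_pos; omega, ?_⟩
  rw [pow_add, pow_orderOf_eq_one, mul_one]

theorem nsbPowerGraph_eq_top_of_prime_card_quotient {G : Type*} [Group G] (H : Subgroup G)
    [H.Normal] {p : ℕ} [Fact p.Prime] (hp : Nat.card (G ⧸ H) = p) : nsbPowerGraph G H = ⊤ := by
  ext a b
  refine ⟨fun h => h.ne, fun hab => ⟨fun h => hab (Subtype.ext h), ?_⟩⟩
  by_cases hb : (QuotientGroup.mk (b : G) : G ⧸ H) = 1
  · refine Or.inr ⟨p, (Fact.out : p.Prime).pos, ?_⟩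
    rw [hb, QuotientGroup.mk_pow, ← hp, pow_card_eq_one']
  · exact Or.inl (exists_pos_pow_eq_of_prime_card hp hb _)

theorem card_nsbVertexSet {G : Type*} [Group G] [Finite G] (H : Subgroup G) :
    Nat.card (nsbVertexSet H) = Nat.card G - Nat.card H + 1 := by
  have hcompl : nsbVertexSet H = insert 1 ((H : Set G)ᶜ) := Set.union_singleton
  rw [Nat.card_coe_set_eq, hcompl, Set.ncard_insert_of_notMem (by simp [H.one_mem]),
    Set.ncard_compl, ← Nat.card_coe_set_eq]
  rfl

theorem statement_15_general {G : Type*} [Group G] (H : Subgroup G) [H.Normal]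
    (hcard : Nat.card H = 3) (hq : Nonempty (G ⧸ H ≃* Multiplicative (ZMod 3))) :
    Nonempty (nsbPowerGraph G H ≃g kGraph 7) := by
  obtain ⟨φ⟩ := hq
  have : Fact (Nat.Prime 3) := ⟨Nat.prime_three⟩
  have hQ : Nat.card (G ⧸ H) = 3 := by simp [Nat.card_congr φ.toEquiv]
  have hG : Nat.card G = 9 := by
    rw [Subgroup.card_eq_card_quotient_mul_card_subgroup H, hQ, hcard]
  have : Finite G := Nat.finite_of_card_ne_zero (by omega)
  have hV : Nat.card (nsbVertexSet H) = 7 := by rw [card_nsbVertexSet, hG, hcard]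
  rw [nsbPowerGraph_eq_top_of_prime_card_quotient H hQ]
  exact ⟨Iso.completeGraph (Finite.equivFinOfCardEq hV)⟩

/-- If `|H| = 3` and `G/H ≅ Z₃`, then `Γ_H(G) ≅ K₇`. -/
theorem statement_15 {G : Type*} [Group G] [Fintype G] (H : Subgroup G) [H.Normal]
    (hcard : Nat.card H = 3) (hq : Nonempty (G ⧸ H ≃* Multiplicative (ZMod 3))) :
    Nonempty (nsbPowerGraph G H ≃g kGraph 7) :=
  statement_15_general H hcard hq
end

section
/- Let G be a finite group and H a normal subgroup of G with |H| = 3 such that the quotient group G/H is isomorphic to the symmetric group S_3. Then the normal subgroup based power graph Γ_H(G) is isomorphic to the graph K_1 ∨ (K_6 ∪ 3K_3). -/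
/-!
Adjacency in `Γ_H(G)` only sees the images of the vertices under `π : G → G/H ≅ S₃`: two distinct
vertices are adjacent iff one image lies in the cyclic subgroup generated by the other. The
identity is the only vertex over `1`, and over every other element of `S₃` lie exactly the
`|H| = 3` elements of a coset. Labelling `K₁ ∨ (K₆ ∪ 3K₃)` by elements of `S₃` in the same way
(every fibre over `q ≠ 1` has three vertices), any fibre-preserving bijection is a graph
isomorphism.
-/

open Subgroup

namespace SimpleGraph

theorem nonempty_iso_fromRel_of_fiberwise_equiv {V W L : Type*} (f : V → L) (g : W → L)
    (r : L → L → Prop) (e : ∀ l, Nonempty ({v // f v = l} ≃ {w // g w = l})) :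
    Nonempty (fromRel (fun a b => r (f a) (f b)) ≃g fromRel (fun a b => r (g a) (g b))) := by
  let E := Equiv.ofFiberEquiv fun l => (e l).some
  refine ⟨⟨E, fun {a b} => ?_⟩⟩
  simp only [fromRel_adj, E.injective.ne_iff, E, Equiv.ofFiberEquiv_map]

end SimpleGraph

section PowersInFiniteGroups

variable {Q : Type*} [Group Q] [Finite Q] {x y : Q}

theorem exists_pos_pow_eq_iff_mem_zpowers : (∃ m, 0 < m ∧ x = y ^ m) ↔ x ∈ zpowers y := by
  rw [← mem_powers_iff_mem_zpowers, Submonoid.mem_powers_iff]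
  constructor
  · rintro ⟨m, -, rfl⟩
    exact ⟨m, rfl⟩
  · rintro ⟨m, rfl⟩
    refine ⟨m + Nat.card Q, by have := Nat.card_pos (α := Q); omega, ?_⟩
    rw [pow_add, pow_card_eq_one', mul_one]

theorem mem_zpowers_iff_exists_lt_card : x ∈ zpowers y ↔ ∃ k < Nat.card Q, x = y ^ k := by
  rw [← mem_powers_iff_mem_zpowers, Submonoid.mem_powers_iff]
  constructor
  · rintro ⟨m, rfl⟩
    exact ⟨m % Nat.card Q, Nat.mod_lt _ Nat.card_pos, (pow_mod_natCard y m).symm⟩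
  · rintro ⟨k, -, rfl⟩
    exact ⟨k, rfl⟩

end PowersInFiniteGroups

section QuotientLabels

variable {G Q : Type*} [Group G] [Group Q] {H : Subgroup G} (π : G →* Q)

theorem nsbPowerGraph_eq_fromRel [Finite Q] (hker : π.ker = H) :
    nsbPowerGraph G H = SimpleGraph.fromRel fun a b : nsbVertexSet H => π a ∈ zpowers (π b) := by
  have hmk (a c : G) : (a : G ⧸ H) = c ↔ π a = π c := by
    rw [QuotientGroup.eq, ← hker, ← MonoidHom.eq_iff, eq_comm]
  ext a b
  simp only [nsbPowerGraph, SimpleGraph.fromRel_adj, ne_eq, Subtype.ext_iff, hmk, map_pow,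
    exists_pos_pow_eq_iff_mem_zpowers]

def nsbVertexSet.fiberEquivFinOne (hker : π.ker = H) :
    {v : nsbVertexSet H // π v = 1} ≃ Fin 1 where
  toFun _ := 0
  invFun _ := ⟨⟨1, Or.inr rfl⟩, map_one π⟩
  left_inv := fun ⟨⟨v, hv⟩, hv1⟩ => by
    have hvH : v ∈ H := hker ▸ hv1
    obtain rfl : v = 1 := hv.resolve_left (not_not_intro hvH)
    rfl
  right_inv := Subsingleton.elim _

noncomputable def nsbVertexSet.fiberEquivOfNeOne (hker : π.ker = H) (hπ : Function.Surjective π)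
    {q : Q} (hq : q ≠ 1) :
    {v : nsbVertexSet H // π v = q} ≃ H :=
  have hmem {g : G} (hg : π g = q) : g ∈ nsbVertexSet H :=
    Or.inl fun hgH => hq (hg ▸ (hker ▸ hgH : g ∈ π.ker))
  (Equiv.subtypeSubtypeEquivSubtype hmem).trans <|
    (MonoidHom.fiberEquivKerOfSurjective hπ q).trans (MulEquiv.subgroupCongr hker).toEquiv

end QuotientLabels

/-- The vertex of `K₁` is labelled `1`, the two halves of `K₆` the two 3-cycles, and the
`i`-th `K₃` the transposition `(i i+1)`. -/
def joinLabel : Fin 1 ⊕ (Fin 6 ⊕ Fin 3 × Fin 3) → Equiv.Perm (Fin 3)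
  | .inl _ => 1
  | .inr (.inl k) => finRotate 3 ^ (k.val / 3 + 1)
  | .inr (.inr (i, _)) => Equiv.swap i (i + 1)

theorem joinGraph_eq_fromRel :
    graphJoin (kGraph 1) (SimpleGraph.sum (kGraph 6) (unionKGraph 3 3)) =
      SimpleGraph.fromRel fun s t => joinLabel s ∈ zpowers (joinLabel t) := by
  have h6 : Nat.card (Equiv.Perm (Fin 3)) = 6 := by simp; rfl
  ext s t
  simp only [SimpleGraph.fromRel_adj, mem_zpowers_iff_exists_lt_card, h6]
  rcases s with s | s | s <;> rcases t with t | t | t <;>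
    simp only [graphJoin, kGraph, SimpleGraph.sum, unionKGraph, SimpleGraph.top_adj] <;>
    revert s t <;> decide

theorem card_joinLabel_fiber_one : Fintype.card {t // joinLabel t = 1} = 1 := by
  decide

theorem card_joinLabel_fiber_of_ne_one (q : Equiv.Perm (Fin 3)) (hq : q ≠ 1) :
    Fintype.card {t // joinLabel t = q} = 3 := by
  revert q; decide

theorem statement_16_general {G : Type*} [Group G] (H : Subgroup G) [H.Normal]
    (hcard : Nat.card H = 3) (hq : Nonempty (G ⧸ H ≃* Equiv.Perm (Fin 3))) :
    Nonempty (nsbPowerGraph G H ≃g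
      graphJoin (kGraph 1) (SimpleGraph.sum (kGraph 6) (unionKGraph 3 3))) := by
  obtain ⟨φ⟩ := hq
  let π := φ.toMonoidHom.comp (QuotientGroup.mk' H)
  have hker : π.ker = H := by
    rw [MonoidHom.ker_comp_of_injective _ _ φ.injective, QuotientGroup.ker_mk']
  have hπ : Function.Surjective π := φ.surjective.comp (QuotientGroup.mk'_surjective H)
  have : Finite H := Nat.finite_of_card_ne_zero (by rw [hcard]; decide)
  rw [nsbPowerGraph_eq_fromRel π hker, joinGraph_eq_fromRel]
  refine SimpleGraph.nonempty_iso_fromRel_of_fiberwise_equiv (fun v : nsbVertexSet H => π v)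
    joinLabel (· ∈ zpowers ·) fun q => ?_
  rcases eq_or_ne q 1 with rfl | hq
  · exact ⟨(nsbVertexSet.fiberEquivFinOne π hker).trans
      (Fintype.equivFinOfCardEq card_joinLabel_fiber_one).symm⟩
  · exact ⟨(nsbVertexSet.fiberEquivOfNeOne π hker hπ hq).trans <|
      (Finite.equivFinOfCardEq hcard).trans
        (Fintype.equivFinOfCardEq (card_joinLabel_fiber_of_ne_one q hq)).symm⟩

/-- If `|H| = 3` and `G/H ≅ S₃`, then `Γ_H(G) ≅ K₁ ∨ (K₆ ∪ 3K₃)`. -/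
theorem statement_16 {G : Type*} [Group G] [Fintype G] (H : Subgroup G) [H.Normal]
    (hcard : Nat.card H = 3) (hq : Nonempty (G ⧸ H ≃* Equiv.Perm (Fin 3))) :
    Nonempty (nsbPowerGraph G H ≃g
      graphJoin (kGraph 1) (SimpleGraph.sum (kGraph 6) (unionKGraph 3 3))) :=
  statement_16_general H hcard hq
end
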